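/- arXiv:1807.07945 — 2 statements merged into one kernel-verified Lean document; each statement's English description precedes it below -/
import Mathlib

section
/- Let k, λ, j be integers with 1 ≤ j < λ < k. If an infinite word avoids (k,λ)-anti-powers (i.e., no factor of it is a (k,λ)-anti-power), then it avoids (k-j, λ-j)-anti-powers. -/
/-- The `i`-th block of length `m` of a finite word `v`. -/
def listBlock {A : Type*} (v : List A) (m i : ℕ) : List A :=
  (v.drop (i * m)).take m

/-- `v` is a `(k,λ)`-anti-power: `v` consists of `k` blocks of equal positive length and
each block is equal to at most `λ` of the blocks. -/
def IsKLAntipower {A : Type*} (k lam : ℕ) (v : List A) : Prop :=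
  ∃ m : ℕ, 1 ≤ m ∧ v.length = k * m ∧
    ∀ j < k, Nat.card {i : ℕ // i < k ∧ listBlock v m i = listBlock v m j} ≤ lam

/-- The finite word `u` is a factor of the infinite word `x`. -/
def IsFactor {A : Type*} (x : ℕ → A) (u : List A) : Prop :=
  ∃ i, u = (List.range u.length).map fun j => x (i + j)

/-- The infinite word `x` avoids `(k,λ)`-anti-powers: no factor of `x` is a
`(k,λ)`-anti-power. -/
def AvoidsKLAntipowers {A : Type*} (x : ℕ → A) (k lam : ℕ) : Prop :=
  ∀ v : List A, IsFactor x v → ¬ IsKLAntipower k lam v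

/-! If `v` is a `(k-j, λ-j)`-anti-power factor of `x` with blocks of length `m` starting at `p`,
extend it to the factor of length `k m` starting at `p`. The `j` new blocks can raise the
number of occurrences of any block by at most `j`, so every block occurs at most
`(λ - j) + j = λ` times, and the extension is a `(k, λ)`-anti-power. -/

open Finset

lemma natCard_subtype_lt_and_eq_card_filter_range (n : ℕ) (p : ℕ → Prop) [DecidablePred p] :
    Nat.card {i : ℕ // i < n ∧ p i} = #{i ∈ range n | p i} := by
  rw [← Nat.card_eq_finsetCard]
  exact Nat.card_congr (Equiv.subtypeEquivRight fun i => by simp)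

lemma card_filter_range_le_add_sub {n k : ℕ} (hnk : n ≤ k) (p : ℕ → Prop) [DecidablePred p] :
    #{i ∈ range k | p i} ≤ #{i ∈ range n | p i} + (k - n) := by
  calc #{i ∈ range k | p i}
      = #({i ∈ range n | p i} ∪ {i ∈ Ico n k | p i}) := by
        rw [← filter_union, range_eq_Ico, range_eq_Ico, Ico_union_Ico_eq_Ico (Nat.zero_le n) hnk]
    _ ≤ #{i ∈ range n | p i} + #{i ∈ Ico n k | p i} := card_union_le _ _
    _ ≤ #{i ∈ range n | p i} + (k - n) := by
        gcongr
        exact (card_filter_le _ _).trans (Nat.card_Ico n k).le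

lemma card_filter_range_eq_le_add_sub {α : Type*} [DecidableEq α] {B : ℕ → α} {n k c : ℕ}
    (hnk : n ≤ k) (hB : ∀ j < n, #{i ∈ range n | B i = B j} ≤ c) (b : α) :
    #{i ∈ range k | B i = b} ≤ c + (k - n) := by
  refine (card_filter_range_le_add_sub hnk _).trans (Nat.add_le_add_right ?_ _)
  by_cases hb : ∃ j < n, B j = b
  · obtain ⟨j, hj, rfl⟩ := hb
    exact hB j hj
  · push Not at hb
    rw [card_eq_zero.mpr (filter_eq_empty_iff.mpr fun i hi => hb i (mem_range.mp hi))]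
    exact Nat.zero_le c

section Factors

variable {A : Type*}

def factorAt (x : ℕ → A) (p n : ℕ) : List A :=
  (List.range n).map fun t => x (p + t)

lemma length_factorAt (x : ℕ → A) (p n : ℕ) : (factorAt x p n).length = n := by
  simp [factorAt]

lemma isFactor_factorAt (x : ℕ → A) (p n : ℕ) : IsFactor x (factorAt x p n) :=
  ⟨p, by rw [length_factorAt]; rfl⟩

lemma listBlock_factorAt (x : ℕ → A) (p m : ℕ) {i n : ℕ} (h : i * m + m ≤ n) :
    listBlock (factorAt x p n) m i = factorAt x (p + i * m) m := by
  apply List.ext_getElem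
  · simp [listBlock, factorAt]; omega
  · intro t _ _
    simp [listBlock, factorAt, Nat.add_assoc]

lemma natCard_listBlock_factorAt_eq [DecidableEq A] (x : ℕ → A) (p : ℕ) {k m j : ℕ} (hj : j < k) :
    Nat.card {i : ℕ // i < k ∧
        listBlock (factorAt x p (k * m)) m i = listBlock (factorAt x p (k * m)) m j} =
      #{i ∈ range k | factorAt x (p + i * m) m = factorAt x (p + j * m) m} := by
  have hblock : ∀ i < k, listBlock (factorAt x p (k * m)) m i = factorAt x (p + i * m) m :=
    fun i hi => listBlock_factorAt x p m (by nlinarith)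
  rw [← natCard_subtype_lt_and_eq_card_filter_range]
  exact Nat.card_congr (Equiv.subtypeEquivRight fun i =>
    and_congr_right fun hi => by rw [hblock i hi, hblock j hj])

end Factors

theorem statement8_general {A : Type*} (k lam j : ℕ) (hjlam : j < lam) (hlamk : lam < k)
    (x : ℕ → A) (h : AvoidsKLAntipowers x k lam) :
    AvoidsKLAntipowers x (k - j) (lam - j) := by
  classical
  rintro v ⟨p, hv⟩ ⟨m, hm, hlen, hcount⟩
  rw [hlen] at hv
  subst hv
  refine h (factorAt x p (k * m)) (isFactor_factorAt x p _) ⟨m, hm, length_factorAt x p _, ?_⟩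
  intro i hi
  rw [natCard_listBlock_factorAt_eq x p hi]
  have hshort : ∀ i < k - j, #{i' ∈ range (k - j) |
      factorAt x (p + i' * m) m = factorAt x (p + i * m) m} ≤ lam - j := fun i hi => by
    rw [← natCard_listBlock_factorAt_eq x p hi]
    exact hcount i hi
  calc _ ≤ lam - j + (k - (k - j)) := card_filter_range_eq_le_add_sub (Nat.sub_le k j) hshort _
    _ = lam := by omega

/-- For `1 ≤ j < λ < k`, an infinite word avoiding `(k,λ)`-anti-powers
also avoids `(k-j, λ-j)`-anti-powers. -/
theorem statement8 {A : Type*} (k lam j : ℕ) (hj : 1 ≤ j) (hjlam : j < lam) (hlamk : lam < k)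
    (x : ℕ → A) (h : AvoidsKLAntipowers x k lam) :
    AvoidsKLAntipowers x (k - j) (lam - j) :=
  statement8_general k lam j hjlam hlamk x h
end

section
/- Let k ≥ 4 be an integer and let (γ_i)_{i≥1} be a strictly increasing sequence of positive integers satisfying γ_{i+1} ≥ (k+1)·γ_i for all i ≥ 1. Define the infinite binary word x by x[j] = 1 if j = γ_i for some i and x[j] = 0 otherwise. Then x is aperiodic and avoids (k, k-3)-anti-powers. In particular, for every k ≥ 4 there exists an infinite aperiodic word avoiding (k, k-3)-anti-powers. -/
/-- The infinite word `x` is eventually periodic: some suffix of `x` equals `u^ω` for a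
nonempty finite word `u`; equivalently, `x` is eventually periodic with some period `p > 0`. -/
def EventuallyPeriodic {A : Type*} (x : ℕ → A) : Prop :=
  ∃ j p : ℕ, 0 < p ∧ ∀ n, j ≤ n → x (n + p) = x n

/-!
Write `x` for the indicator word of the lacunary set `{γ i}`. Since `γ (i+1) ≥ (k+1) γ i`,
every interval `[a, (k+1) a)` contains at most one `γ i`. The last `k - 1` blocks of a factor
of length `k m` starting at `i₀` lie in `[i₀ + m, (k+1)(i₀ + m))`, so at most one of them
contains a `1`; hence at least `k - 2` blocks are `0^m`, and such a block occurs more than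
`k - 3` times. The gaps `γ (i+1) - γ i ≥ γ i` are unbounded, which rules out eventual
periodicity.
-/

open Filter

theorem StrictMono.subsingleton_Ico_inter_range {γ : ℕ → ℕ} {c : ℕ} (hmono : StrictMono γ)
    (hgrow : ∀ i, c * γ i ≤ γ (i + 1)) (a : ℕ) :
    (Set.Ico a (c * a) ∩ Set.range γ).Subsingleton := by
  have key : ∀ i j, i < j → a ≤ γ i → γ j < c * a → False := fun i j hij hi hj =>
    (calc c * a ≤ c * γ i := Nat.mul_le_mul_left c hi
      _ ≤ γ (i + 1) := hgrow i
      _ ≤ γ j := hmono.monotone hij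
      _ < c * a := hj).false
  rintro _ ⟨⟨hai, hic⟩, i, rfl⟩ _ ⟨⟨haj, hjc⟩, j, rfl⟩
  rcases lt_trichotomy i j with hij | rfl | hji
  exacts [(key i j hij hai hjc).elim, rfl, (key j i hji haj hic).elim]

theorem StrictMono.tendsto_sub_atTop_of_mul_le {γ : ℕ → ℕ} {c : ℕ} (hmono : StrictMono γ)
    (hc : 2 ≤ c) (hgrow : ∀ i, c * γ i ≤ γ (i + 1)) :
    Tendsto (fun i => γ (i + 1) - γ i) atTop atTop :=
  tendsto_atTop_mono (fun i => by
    have := hgrow i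
    have := Nat.mul_le_mul_right (γ i) hc
    omega) hmono.tendsto_atTop

section Words

variable {A : Type*}

theorem not_eventuallyPeriodic_of_support_eq_range [Zero A] {x : ℕ → A} {γ : ℕ → ℕ}
    (hmono : StrictMono γ) (hgap : Tendsto (fun i => γ (i + 1) - γ i) atTop atTop)
    (hsupp : Function.support x = Set.range γ) : ¬ EventuallyPeriodic x := by
  rintro ⟨j, p, hp, hper⟩
  obtain ⟨i, hij, hpi⟩ :=
    ((hmono.tendsto_atTop.eventually_ge_atTop j).and (hgap.eventually_gt_atTop p)).exists
  have hshift : γ i + p ∈ Set.range γ := by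
    rw [← hsupp, Function.mem_support, hper _ hij, ← Function.mem_support, hsupp]
    exact ⟨i, rfl⟩
  obtain ⟨l, hl⟩ := hshift
  have hil : i < l := hmono.lt_iff_lt.mp (by omega)
  have hli : l < i + 1 := hmono.lt_iff_lt.mp (by omega)
  omega

theorem listBlock_map_range (x : ℕ → A) {k t : ℕ} (m i₀ : ℕ) (ht : t < k) :
    listBlock ((List.range (k * m)).map fun j => x (i₀ + j)) m t
      = (List.range m).map fun r => x (i₀ + (t * m + r)) := by
  have hsplit : k * m = t * m + (m + (k * m - (t * m + m))) := by
    have : (t + 1) * m ≤ k * m := Nat.mul_le_mul_right m ht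
    rw [add_mul, one_mul] at this
    omega
  unfold listBlock
  rw [← List.map_drop, ← List.map_take, hsplit, List.range_add,
    List.drop_left' (by simp), ← List.map_take, List.take_range,
    Nat.min_eq_left (Nat.le_add_right _ _), List.map_map]
  rfl

theorem card_le_natCard_listBlock_eq {v : List A} {k m j : ℕ} {S : Finset ℕ}
    (hS : S ⊆ Finset.range k) (hblock : ∀ i ∈ S, listBlock v m i = listBlock v m j) :
    S.card ≤ Nat.card {i : ℕ // i < k ∧ listBlock v m i = listBlock v m j} := by
  rw [← Set.ncard_coe_finset]
  exact Set.ncard_le_ncard (fun i hi => ⟨Finset.mem_range.mp (hS hi), hblock i hi⟩)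
    ((Set.finite_lt_nat k).subset fun i hi => hi.1)

theorem exists_listBlock_eq_replicate [Zero A] {x : ℕ → A} {k m i₀ : ℕ}
    (h : (Set.Ico (i₀ + m) (i₀ + k * m) ∩ Function.support x).Subsingleton) :
    ∃ t₁, ∀ t < k, t ≠ 0 → t ≠ t₁ →
      listBlock ((List.range (k * m)).map fun j => x (i₀ + j)) m t = List.replicate m 0 := by
  obtain ⟨q, hq⟩ : ∃ q, Set.Ico (i₀ + m) (i₀ + k * m) ∩ Function.support x ⊆ {q} := by
    rcases h.eq_empty_or_singleton with h | ⟨q, h⟩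
    exacts [⟨0, h.subset.trans (Set.empty_subset _)⟩, ⟨q, h.subset⟩]
  refine ⟨(q - i₀) / m, fun t ht ht0 htq => ?_⟩
  rw [listBlock_map_range x m i₀ ht, List.eq_replicate_iff]
  refine ⟨by simp, ?_⟩
  simp only [List.mem_map, List.mem_range]
  rintro _ ⟨r, hr, rfl⟩
  by_contra hne
  have hlo : m ≤ t * m := Nat.le_mul_of_pos_left m (Nat.pos_of_ne_zero ht0)
  have hhi : (t + 1) * m ≤ k * m := Nat.mul_le_mul_right m ht
  rw [add_mul, one_mul] at hhi
  have hq' : i₀ + (t * m + r) = q := hq ⟨⟨by omega, by omega⟩, hne⟩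
  apply htq
  rw [← hq', Nat.add_sub_cancel_left, Nat.add_comm, Nat.add_mul_div_right _ _ (by omega),
    Nat.div_eq_of_lt hr, zero_add]

theorem avoidsKLAntipowers_of_subsingleton [Zero A] {x : ℕ → A} {k : ℕ} (hk : 3 ≤ k)
    (h : ∀ i₀ m, (Set.Ico (i₀ + m) (i₀ + k * m) ∩ Function.support x).Subsingleton) :
    AvoidsKLAntipowers x k (k - 3) := by
  rintro v ⟨i₀, hv⟩ ⟨m, -, hlen, hcount⟩
  rw [hlen] at hv
  subst hv
  obtain ⟨t₁, ht₁⟩ := exists_listBlock_eq_replicate (h i₀ m)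
  have hZ : ∀ t ∈ Finset.range k \ {0, t₁},
      listBlock ((List.range (k * m)).map fun j => x (i₀ + j)) m t = List.replicate m 0 := by
    intro t ht
    simp only [Finset.mem_sdiff, Finset.mem_range, Finset.mem_insert,
      Finset.mem_singleton, not_or] at ht
    exact ht₁ t ht.1 ht.2.1 ht.2.2
  have hZcard : k - 2 ≤ (Finset.range k \ {0, t₁}).card := by
    have := Finset.le_card_sdiff {0, t₁} (Finset.range k)
    rw [Finset.card_range] at this
    have := Finset.card_le_two (a := 0) (b := t₁)
    omega
  obtain ⟨j, hj⟩ := Finset.card_pos.mp (by omega : 0 < (Finset.range k \ {0, t₁}).card)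
  have hle := card_le_natCard_listBlock_eq Finset.sdiff_subset
    fun i hi => (hZ i hi).trans (hZ j hj).symm
  have := hcount j (Finset.mem_range.mp (Finset.mem_sdiff.mp hj).1)
  omega

end Words

open Classical in
theorem statement11_general (k : ℕ) (hk : 4 ≤ k) (γ : ℕ → ℕ)
    (hmono : StrictMono γ) (hgrow : ∀ i, (k + 1) * γ i ≤ γ (i + 1))
    (x : ℕ → ℕ) (hx : x = fun j => if ∃ i, γ i = j then 1 else 0) :
    (¬ EventuallyPeriodic x ∧ AvoidsKLAntipowers x k (k - 3)) ∧
    ∃ y : ℕ → ℕ, ¬ EventuallyPeriodic y ∧ AvoidsKLAntipowers y k (k - 3) := by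
  have hsupp : Function.support x = Set.range γ := by
    ext n
    simp [hx]
  have haper : ¬ EventuallyPeriodic x := not_eventuallyPeriodic_of_support_eq_range hmono
    (hmono.tendsto_sub_atTop_of_mul_le (by omega) hgrow) hsupp
  have havoid : AvoidsKLAntipowers x k (k - 3) := by
    refine avoidsKLAntipowers_of_subsingleton (by omega) fun i₀ m => ?_
    refine (hmono.subsingleton_Ico_inter_range hgrow (i₀ + m)).anti
      (Set.inter_subset_inter (Set.Ico_subset_Ico_right ?_) hsupp.le)
    nlinarith
  exact ⟨⟨haper, havoid⟩, x, haper, havoid⟩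

open Classical in
/-- Let `k ≥ 4` and let `(γ_i)` be a strictly increasing sequence of
positive integers with `γ_{i+1} ≥ (k+1)·γ_i`.  The binary word `x` with `x[j] = 1` exactly
when `j` is one of the `γ_i` is aperiodic and avoids `(k, k-3)`-anti-powers.  In particular,
for every `k ≥ 4` there is an aperiodic infinite word avoiding `(k, k-3)`-anti-powers. -/
theorem statement11 (k : ℕ) (hk : 4 ≤ k) (γ : ℕ → ℕ) (hpos : ∀ i, 0 < γ i)
    (hmono : StrictMono γ) (hgrow : ∀ i, (k + 1) * γ i ≤ γ (i + 1))
    (x : ℕ → ℕ) (hx : x = fun j => if ∃ i, γ i = j then 1 else 0) :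
    (¬ EventuallyPeriodic x ∧ AvoidsKLAntipowers x k (k - 3)) ∧
    ∃ y : ℕ → ℕ, ¬ EventuallyPeriodic y ∧ AvoidsKLAntipowers y k (k - 3) :=
  statement11_general k hk γ hmono hgrow x hx
end
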